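/- arXiv:1603.08566 — 2 statements merged into one kernel-verified Lean document; each statement's English description precedes it below -/
import Mathlib

section
/- Let ω be a connection 1-form on a principal bundle P with curvature Ω. If U is a horizontal vector field and V is a vertical vector field on P, then the Lie derivative satisfies (L_U ω)(V) = 0. Consequently, for horizontal vector fields U_k,…,U_1,X,Y, one has U_k⋯U_1 Ω(X,Y) = -ω(v[U_k, v[U_{k-1}, …, v[X,Y]…]]). -/
/-!
Since `Ω = dω + ω ∧ ω` and `ω` kills horizontal fields, for horizontal `U` the intrinsic formula
for `dω` collapses to `Ω(U, Z) = U(ω Z) - ω[U, Z]`, i.e. `(L_U ω)(Z) = Ω(U, Z)`. This vanishes for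
vertical `Z` because `Ω` is horizontal, and for horizontal `Z` it gives `Ω(X, Y) = -ω(v[X, Y])`.
Differentiating the latter along horizontal `U_1, …, U_k` and using `U(ω Z) = ω(v[U, Z])` for the
vertical fields `Z = v[U_{i-1}, …]` gives the iterated formula.
-/

theorem List.foldr_apply_neg {α M F : Type*} [AddCommGroup M] [FunLike F M M]
    [AddMonoidHomClass F M M] (f : α → F) (l : List α) (m : M) :
    l.foldr (fun a m => f a m) (-m) = -l.foldr (fun a m => f a m) m := by
  induction l with
  | nil => rfl
  | cons a l ih => simp only [List.foldr_cons, ih, map_neg]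

section Connection

variable {R VF W : Type*} [Semiring R] [LieRing VF] [LieRing W] [Module R VF] [Module R W]
  (ω : VF →ₗ[R] W) (act : VF → W →ₗ[R] W)

theorem curvature_eq_act_sub_omega_lie {Ω dω : VF → VF → W}
    (hstruct : ∀ X Y, Ω X Y = dω X Y + ⁅ω X, ω Y⁆)
    (hdω : ∀ X Y, dω X Y = act X (ω Y) - act Y (ω X) - ω ⁅X, Y⁆)
    {U : VF} (hU : ω U = 0) (Z : VF) :
    Ω U Z = act U (ω Z) - ω ⁅U, Z⁆ := by
  rw [hstruct, hdω, hU, map_zero, zero_lie, sub_zero, add_zero]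

theorem curvature_eq_neg_omega_lie {Ω dω : VF → VF → W}
    (hstruct : ∀ X Y, Ω X Y = dω X Y + ⁅ω X, ω Y⁆)
    (hdω : ∀ X Y, dω X Y = act X (ω Y) - act Y (ω X) - ω ⁅X, Y⁆)
    {X Y : VF} (hX : ω X = 0) (hY : ω Y = 0) :
    Ω X Y = -ω ⁅X, Y⁆ := by
  rw [curvature_eq_act_sub_omega_lie ω act hstruct hdω hX, hY, map_zero, zero_sub]

theorem act_omega_eq_omega_lie_of_curvature_eq_zero {Ω dω : VF → VF → W}
    (hstruct : ∀ X Y, Ω X Y = dω X Y + ⁅ω X, ω Y⁆)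
    (hdω : ∀ X Y, dω X Y = act X (ω Y) - act Y (ω X) - ω ⁅X, Y⁆)
    {U Z : VF} (hU : ω U = 0) (hUZ : Ω U Z = 0) :
    act U (ω Z) = ω ⁅U, Z⁆ :=
  sub_eq_zero.mp ((curvature_eq_act_sub_omega_lie ω act hstruct hdω hU Z).symm.trans hUZ)

theorem List.foldr_act_omega_eq_omega_foldr {vert : VF → Prop} {v : VF → VF}
    (h_vproj : ∀ Z, vert (v Z)) (hω_vproj : ∀ Z, ω (v Z) = ω Z) {Us : List VF}
    (hUs : ∀ U ∈ Us, ∀ Z, vert Z → act U (ω Z) = ω ⁅U, Z⁆) {Z : VF} (hZ : vert Z) :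
    Us.foldr (fun U w => act U w) (ω Z) = ω (Us.foldr (fun U Z => v ⁅U, Z⁆) Z) := by
  induction Us with
  | nil => rfl
  | cons U Us ih =>
    have hvert : vert (Us.foldr (fun U Z => v ⁅U, Z⁆) Z) := by
      cases Us with
      | nil => exact hZ
      | cons _ _ => exact h_vproj _
    rw [List.foldr_cons, List.foldr_cons, ih fun U' hU' => hUs U' (List.mem_cons_of_mem U hU'),
      hUs U List.mem_cons_self _ hvert, hω_vproj]

end Connection

theorem lie_derivative_vanishes_and_iterated_curvature_formula_general
    (VF W : Type*) [LieRing VF] [LieAlgebra ℝ VF] [LieRing W] [LieAlgebra ℝ W]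
    (ω : VF →ₗ[ℝ] W) (Ω dω : VF → VF → W) (act : VF → W →ₗ[ℝ] W)
    (horiz vert : VF → Prop) (v : VF → VF) (Lω : VF → VF → W)
    -- Lie derivative of the 1-form ω evaluated on a field
    (hLie : ∀ U V, Lω U V = act U (ω V) - ω ⁅U, V⁆)
    -- structural equation Ω = dω + ω∧ω
    (hstruct : ∀ X Y, Ω X Y = dω X Y + ⁅ω X, ω Y⁆)
    -- intrinsic formula for dω
    (hdω : ∀ X Y, dω X Y = act X (ω Y) - act Y (ω X) - ω ⁅X, Y⁆)
    -- ω is a vertical form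
    (hω_horiz : ∀ X, horiz X → ω X = 0)
    (hω_vproj : ∀ Z, ω (v Z) = ω Z)
    -- decomposition into horizontal and vertical parts
    (h_vproj : ∀ Z, vert (v Z))
    -- Ω is a horizontal form
    (hΩ_horiz : ∀ X Z, vert Z → Ω X Z = 0 ∧ Ω Z X = 0) :
    (∀ U V, horiz U → vert V → Lω U V = 0) ∧
    (∀ (X Y : VF) (Us : List VF), horiz X → horiz Y → (∀ U ∈ Us, horiz U) →
      Us.foldr (fun U w => act U w) (Ω X Y)
        = -ω (Us.foldr (fun U Z => v ⁅U, Z⁆) (v ⁅X, Y⁆))) := by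
  have hact : ∀ U Z, horiz U → vert Z → act U (ω Z) = ω ⁅U, Z⁆ := fun U Z hU hZ =>
    act_omega_eq_omega_lie_of_curvature_eq_zero ω act hstruct hdω (hω_horiz U hU)
      (hΩ_horiz U Z hZ).1
  refine ⟨fun U V hU hV => by rw [hLie, hact U V hU hV, sub_self], ?_⟩
  intro X Y Us hX hY hUs
  rw [curvature_eq_neg_omega_lie ω act hstruct hdω (hω_horiz X hX) (hω_horiz Y hY), ← hω_vproj,
    List.foldr_apply_neg, List.foldr_act_omega_eq_omega_foldr ω act h_vproj hω_vproj
      (fun U hU Z hZ => hact U Z (hUs U hU) hZ) (h_vproj _)]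

/-- For a connection 1-form `ω` with curvature `Ω`, if `U` is horizontal and
`V` is vertical then `(L_U ω)(V) = 0`; consequently for horizontal fields
`U_k, …, U_1, X, Y` one has `U_k ⋯ U_1 Ω(X,Y) = -ω(v[U_k, v[U_{k-1}, …, v[X,Y]…]])`.

Vector fields are modelled abstractly as a real Lie algebra `VF`; `W` is the Lie algebra
of Lie-algebra-valued functions on the bundle, `act X` is differentiation along `X`,
`horiz`/`vert` are the horizontal/vertical predicates, `v`/`hproj` the vertical and
horizontal projections, and `Lω U V` is the Lie derivative `(L_U ω)(V)`. -/
theorem lie_derivative_vanishes_and_iterated_curvature_formula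
    (VF W : Type*) [LieRing VF] [LieAlgebra ℝ VF] [LieRing W] [LieAlgebra ℝ W]
    (ω : VF →ₗ[ℝ] W) (Ω dω : VF → VF → W) (act : VF → W →ₗ[ℝ] W)
    (horiz vert : VF → Prop) (v hproj : VF → VF) (Lω : VF → VF → W)
    -- Lie derivative of the 1-form ω evaluated on a field
    (hLie : ∀ U V, Lω U V = act U (ω V) - ω ⁅U, V⁆)
    -- structural equation Ω = dω + ω∧ω
    (hstruct : ∀ X Y, Ω X Y = dω X Y + ⁅ω X, ω Y⁆)
    -- intrinsic formula for dω
    (hdω : ∀ X Y, dω X Y = act X (ω Y) - act Y (ω X) - ω ⁅X, Y⁆)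
    -- ω is a vertical form
    (hω_horiz : ∀ X, horiz X → ω X = 0)
    (hω_vproj : ∀ Z, ω (v Z) = ω Z)
    -- decomposition into horizontal and vertical parts
    (hdecomp : ∀ Z, hproj Z + v Z = Z)
    (h_hproj : ∀ Z, horiz (hproj Z)) (h_vproj : ∀ Z, vert (v Z))
    -- Ω is a horizontal form
    (hΩ_horiz : ∀ X Z, vert Z → Ω X Z = 0 ∧ Ω Z X = 0) :
    (∀ U V, horiz U → vert V → Lω U V = 0) ∧
    (∀ (X Y : VF) (Us : List VF), horiz X → horiz Y → (∀ U ∈ Us, horiz U) →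
      Us.foldr (fun U w => act U w) (Ω X Y)
        = -ω (Us.foldr (fun U Z => v ⁅U, Z⁆) (v ⁅X, Y⁆))) :=
  lie_derivative_vanishes_and_iterated_curvature_formula_general VF W ω Ω dω act horiz vert v Lω
    hLie hstruct hdω hω_horiz hω_vproj h_vproj hΩ_horiz
end

section
/- The infinitesimal holonomy Lie algebra at a point σ of the holonomy bundle equals the image under the connection form of the Lie algebra generated by horizontal vector fields: g'(σ) = ω_σ(h(σ)), where h(σ) denotes the set of values at σ of vector fields in the Lie algebra generated by horizontal vector fields. -/
/-!
The connection form turns brackets of horizontal fields into curvature, `ω⁅X, Y⁆ = -Ω(X, Y)`,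
and brackets of a horizontal field with a vertical part into derivatives,
`ω⁅U, v Z⁆ = U(ω Z)`. Hence every iterated derivative `U_k ⋯ U_1 Ω(X, Y)` is `ω` of an element
of the Lie algebra `h` generated by the horizontal fields. Conversely, the submodule of fields
whose `ω` lies in the span `N` of these derivatives contains the horizontal fields and is stable
under bracketing with them, so it contains `h`. Thus `ω(h) = N` as spaces of functions, and
evaluating at `σ` gives the theorem.
-/

namespace LieSubalgebra

variable {R L : Type*} [CommRing R] [LieRing L] [LieAlgebra R L]

theorem lieSpan_le_of_lie_mem {s : Set L} {p : Submodule R L} (hs : s ⊆ p)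
    (hlie : ∀ x ∈ s, ∀ y ∈ p, ⁅x, y⁆ ∈ p) : (lieSpan R L s).toSubmodule ≤ p := by
  -- the elements of `p` whose adjoint action preserves `p` form a subalgebra, by Jacobi
  let K : LieSubalgebra R L :=
    { carrier := {x | x ∈ p ∧ ∀ y ∈ p, ⁅x, y⁆ ∈ p}
      add_mem' := fun ⟨ha, ha'⟩ ⟨hb, hb'⟩ =>
        ⟨p.add_mem ha hb, fun y hy => by rw [add_lie]; exact p.add_mem (ha' y hy) (hb' y hy)⟩
      zero_mem' := ⟨p.zero_mem, fun y _ => by rw [zero_lie]; exact p.zero_mem⟩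
      smul_mem' := fun c _ ⟨ha, ha'⟩ =>
        ⟨p.smul_mem c ha, fun y hy => by rw [smul_lie]; exact p.smul_mem c (ha' y hy)⟩
      lie_mem' := fun {a b} ⟨_, ha'⟩ ⟨hb, hb'⟩ =>
        ⟨ha' b hb, fun y hy => by
          rw [lie_lie]; exact p.sub_mem (ha' _ (hb' y hy)) (hb' _ (ha' y hy))⟩ }
  have hsK : lieSpan R L s ≤ K := lieSpan_le.mpr fun x hx => ⟨hs hx, hlie x hx⟩
  exact fun x hx => (hsK hx).1

end LieSubalgebra

section Connection

variable {R P 𝔤 VF : Type*} [CommRing R] [LieRing 𝔤] [LieAlgebra R 𝔤]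
  (Ω : VF → VF → P → 𝔤) (act : VF → (P → 𝔤) →ₗ[R] (P → 𝔤)) (horiz : VF → Prop)

def horizontalCurvatureDerivatives : Set (P → 𝔤) :=
  { f | ∃ (Us : List VF) (X Y : VF), (∀ U ∈ Us, horiz U) ∧ horiz X ∧ horiz Y ∧
      f = Us.foldr (fun U f => act U f) (Ω X Y) }

variable {Ω act horiz}

theorem act_mem_span_horizontalCurvatureDerivatives {U : VF} (hU : horiz U) {f : P → 𝔤}
    (hf : f ∈ Submodule.span R (horizontalCurvatureDerivatives Ω act horiz)) :
    act U f ∈ Submodule.span R (horizontalCurvatureDerivatives Ω act horiz) := by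
  refine (Submodule.span_le (p := (Submodule.span R _).comap (act U))).mpr ?_ hf
  rintro _ ⟨Us, X, Y, hUs, hX, hY, rfl⟩
  refine Submodule.subset_span ⟨U :: Us, X, Y, ?_, hX, hY, rfl⟩
  simpa [List.forall_mem_cons] using ⟨hU, hUs⟩

variable [LieRing VF] [LieAlgebra R VF] {ω : VF →ₗ[R] (P → 𝔤)}

theorem connection_lie_eq_neg_curvature
    (hcartan : ∀ X Y, Ω X Y = act X (ω Y) - act Y (ω X) - ω ⁅X, Y⁆ + fun p => ⁅ω X p, ω Y p⁆)
    {X Y : VF} (hX : ω X = 0) (hY : ω Y = 0) : ω ⁅X, Y⁆ = -Ω X Y := by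
  rw [hcartan, hX, hY]
  ext p
  simp

theorem connection_lie_eq_act_of_curvature_eq_zero
    (hcartan : ∀ X Y, Ω X Y = act X (ω Y) - act Y (ω X) - ω ⁅X, Y⁆ + fun p => ⁅ω X p, ω Y p⁆)
    {U W : VF} (hU : ω U = 0) (hΩ : Ω U W = 0) : ω ⁅U, W⁆ = act U (ω W) := by
  rw [hcartan, hU] at hΩ
  ext p
  have hΩp := congrFun hΩ p
  simp only [map_zero, Pi.add_apply, Pi.sub_apply, Pi.zero_apply, zero_lie, add_zero,
    sub_zero, sub_eq_zero] at hΩp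
  exact hΩp.symm

theorem span_horizontalCurvatureDerivatives_eq_map_lieSpan {hproj v : VF → VF}
    (hcartan : ∀ X Y, Ω X Y = act X (ω Y) - act Y (ω X) - ω ⁅X, Y⁆ + fun p => ⁅ω X p, ω Y p⁆)
    (hω_horiz : ∀ X, horiz X → ω X = 0) (hω_vproj : ∀ Z, ω (v Z) = ω Z)
    (hdecomp : ∀ Z, hproj Z + v Z = Z) (h_hproj : ∀ Z, horiz (hproj Z))
    (hΩ_vert : ∀ X Z, Ω X (v Z) = 0) :
    Submodule.span R (horizontalCurvatureDerivatives Ω act horiz)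
      = (LieSubalgebra.lieSpan R VF { U | horiz U }).toSubmodule.map ω := by
  set h := LieSubalgebra.lieSpan R VF { U | horiz U }
  have hlie_horiz {X Y : VF} (hX : horiz X) (hY : horiz Y) : ω ⁅X, Y⁆ = -Ω X Y :=
    connection_lie_eq_neg_curvature hcartan (hω_horiz X hX) (hω_horiz Y hY)
  have hlie_vert {U : VF} (hU : horiz U) (Z : VF) : ω ⁅U, v Z⁆ = act U (ω Z) := by
    rw [connection_lie_eq_act_of_curvature_eq_zero hcartan (hω_horiz U hU) (hΩ_vert U Z),
      hω_vproj]
  have hmem {U : VF} (hU : horiz U) : U ∈ h := LieSubalgebra.subset_lieSpan hU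
  apply le_antisymm
  · rw [Submodule.span_le]
    rintro _ ⟨Us, X, Y, hUs, hX, hY, rfl⟩
    induction Us with
    | nil =>
      refine ⟨-⁅X, Y⁆, neg_mem (h.lie_mem (hmem hX) (hmem hY)), ?_⟩
      rw [List.foldr_nil, map_neg, hlie_horiz hX hY, neg_neg]
    | cons U Us ih =>
      obtain ⟨Z, hZ, hωZ⟩ := ih fun W hW => hUs W (List.mem_cons_of_mem U hW)
      have hU : horiz U := hUs U List.mem_cons_self
      have hvZ : v Z ∈ h := by
        rw [eq_sub_of_add_eq' (hdecomp Z)]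
        exact sub_mem hZ (hmem (h_hproj Z))
      exact ⟨⁅U, v Z⁆, h.lie_mem (hmem hU) hvZ, by simp [hlie_vert hU, ← hωZ]⟩
  · rw [Submodule.map_le_iff_le_comap]
    refine LieSubalgebra.lieSpan_le_of_lie_mem (fun U hU => by simp [hω_horiz U hU]) ?_
    intro U hU W hW
    have hsplit : ⁅U, W⁆ = ⁅U, hproj W⁆ + ⁅U, v W⁆ := by rw [← lie_add, hdecomp]
    rw [Submodule.mem_comap, hsplit, map_add, hlie_horiz hU (h_hproj W), hlie_vert hU]
    refine Submodule.add_mem _ (neg_mem (Submodule.subset_span ?_))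
      (act_mem_span_horizontalCurvatureDerivatives hU hW)
    exact ⟨[], U, hproj W, by simp, hU, h_hproj W, rfl⟩

end Connection

/-- the infinitesimal holonomy Lie algebra at a point `σ` of the holonomy
bundle equals the image under the connection form of the Lie algebra generated by the
horizontal vector fields: `g'(σ) = ω_σ(h(σ))`.

Vector fields on the bundle `P` form an abstract real Lie algebra `VF`; the connection
form `ω` assigns to a vector field a `𝔤`-valued function on `P`; `act X` differentiates
such functions along `X`; `Ω` is the curvature; `g'(σ)` is the span of all values
`(U_k ⋯ U_1 Ω(X,Y))(σ)` with the `U_i, X, Y` horizontal; `h(σ)` is the set of values at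
`σ` (here, the image under `ω_σ = eval σ ∘ ω`) of the Lie algebra of vector fields
generated by the horizontal fields. -/
theorem infinitesimal_holonomy_eq_connection_image_of_horizontal_lie_algebra
    (P 𝔤 VF : Type*) [LieRing 𝔤] [LieAlgebra ℝ 𝔤] [LieRing VF] [LieAlgebra ℝ VF]
    (ω : VF →ₗ[ℝ] (P → 𝔤)) (Ω dω : VF → VF → P → 𝔤)
    (act : VF → (P → 𝔤) →ₗ[ℝ] (P → 𝔤))
    (horiz : VF → Prop) (hproj v : VF → VF)
    -- structural equation Ω = dω + ω∧ω (pointwise bracket on 𝔤-valued functions)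
    (hstruct : ∀ X Y, Ω X Y = dω X Y + fun p => ⁅ω X p, ω Y p⁆)
    -- intrinsic formula for dω
    (hdω : ∀ X Y, dω X Y = act X (ω Y) - act Y (ω X) - ω ⁅X, Y⁆)
    -- ω is vertical, vanishing on horizontal fields
    (hω_horiz : ∀ X, horiz X → ω X = 0)
    (hω_vproj : ∀ Z, ω (v Z) = ω Z)
    -- decomposition into horizontal and vertical parts
    (hdecomp : ∀ Z, hproj Z + v Z = Z)
    (h_hproj : ∀ Z, horiz (hproj Z))
    -- Ω is horizontal: it vanishes on vertical parts
    (hΩ_horiz : ∀ X Z, Ω X (v Z) = 0 ∧ Ω (v Z) X = 0)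
    (σ : P) :
    Submodule.span ℝ
        { w : 𝔤 | ∃ (Us : List VF) (X Y : VF), (∀ U ∈ Us, horiz U) ∧ horiz X ∧ horiz Y ∧
            w = (Us.foldr (fun U f => act U f) (Ω X Y)) σ }
      = Submodule.map ((LinearMap.proj σ : (P → 𝔤) →ₗ[ℝ] 𝔤).comp ω)
          (LieSubalgebra.lieSpan ℝ VF { U | horiz U }).toSubmodule := by
  have hcartan : ∀ X Y, Ω X Y
      = act X (ω Y) - act Y (ω X) - ω ⁅X, Y⁆ + fun p => ⁅ω X p, ω Y p⁆ := fun X Y => by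
    rw [hstruct, hdω]
  rw [Submodule.map_comp, ← span_horizontalCurvatureDerivatives_eq_map_lieSpan hcartan hω_horiz
    hω_vproj hdecomp h_hproj fun X Z => (hΩ_horiz X Z).1, Submodule.map_span]
  congr 1
  ext w
  constructor
  · rintro ⟨Us, X, Y, hUs, hX, hY, rfl⟩
    exact ⟨_, ⟨Us, X, Y, hUs, hX, hY, rfl⟩, rfl⟩
  · rintro ⟨_, ⟨Us, X, Y, hUs, hX, hY, rfl⟩, rfl⟩
    exact ⟨Us, X, Y, hUs, hX, hY, rfl⟩
end
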